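/- Let L₊ = D + 1 − 3Q² and L₋ = D + 1 − Q², where Q is the ground state solving DQ + Q = Q³. Suppose S₁ solves L₋S₁ = ΛQ and T₂ solves L₊T₂ = (1/2)S₁ − ΛS₁ + S₁²Q. Assume the identities L₊(ΛQ) = −Q, [D,Λ] = D, ([Q²,Λ]f = −2xQ'Q f), and the pointwise identity −(xQ')Q + QΛQ = (1/2)Q². Then (S₁, S₁) + 2(Q, T₂) = 0. -/

import Mathlib

open MeasureTheory ComplexConjugate

/-- Fourier multiplier operator with symbol `m`, using the convention
`𝓕u(ξ) = ∫ e^{-iξy} u(y) dy`, `u(x) = (1/2π) ∫ e^{iξx} 𝓕u(ξ) dξ`. -/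
noncomputable def fourierMult (m : ℝ → ℂ) (u : ℝ → ℂ) : ℝ → ℂ :=
  fun x => (1 / (2 * (Real.pi : ℂ))) *
    ∫ ξ : ℝ, m ξ * (∫ y : ℝ, Complex.exp (-Complex.I * (ξ : ℂ) * (y : ℂ)) * u y) *
      Complex.exp (Complex.I * (ξ : ℂ) * (x : ℂ))

/-- The half-wave operator `D = |∇|`, Fourier multiplier with symbol `|ξ|`. -/
noncomputable def Dop : (ℝ → ℂ) → (ℝ → ℂ) :=
  fourierMult (fun ξ => ((|ξ| : ℝ) : ℂ))

/-- The scaling generator `Λf = (1/2)f + x f'`. -/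
noncomputable def lam (f : ℝ → ℂ) : ℝ → ℂ :=
  fun x => (1/2 : ℂ) * f x + (x : ℂ) * deriv f x


/-!
Once the equations for `S₁`, `T₂` and `ΛQ`, the commutator `[D, Λ] = D` and the product rule
`Λ(Q²S₁) = Q²ΛS₁ + 2xQQ'S₁` are substituted, the integrand `S₁² + 2QT₂` becomes
`-2[D(ΛQ)·T₂ - ΛQ·DT₂] - [D(ΛS₁)·S₁ - ΛS₁·DS₁] + [Λ(ΛQ)·S₁ + ΛQ·ΛS₁]`.
The first two brackets integrate to zero because `D` is symmetric, its symbol `|ξ|` being even: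
`∫ Df·g = ∫ 2π|η| 𝓕f(η) 𝓕g(-η) dη`. The last one is the derivative of `x f g`.
-/

open SchwartzMap FourierTransform Real

-- The substitution `ξ = 2πη` turns the convention of `fourierMult` into Mathlib's `𝓕`.
lemma Dop_eq_fourierInv (u : ℝ → ℂ) :
    Dop u = 𝓕⁻ (fun η : ℝ => ((2 * π * |η| : ℝ) : ℂ) • 𝓕 u η) := by
  ext x
  have h2π : (0 : ℝ) < 2 * π := by positivity
  rw [fourierInv_eq_fourier_neg, fourier_real_eq_integral_exp_smul,
    ← inv_smul_smul₀ h2π.ne' (∫ v : ℝ, _), ← abs_of_pos h2π, ← Measure.integral_comp_div,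
    abs_of_pos h2π, ← integral_smul, Dop, fourierMult, ← integral_const_mul]
  congr 1 with ξ
  have hξ : 2 * π * |ξ / (2 * π)| = |ξ| := by
    rw [abs_div, abs_of_pos h2π]; field_simp
  have hphase (v : ℝ) : -2 * π * v * (ξ / (2 * π)) = -(ξ * v) := by field_simp
  have hx : -2 * π * (ξ / (2 * π)) * -x = ξ * x := by field_simp
  simp only [fourier_real_eq_integral_exp_smul, smul_eq_mul, hξ, hphase, hx, Complex.real_smul]
  push_cast
  ring_nf

lemma integral_fourierInv_mul_comm {h g : ℝ → ℂ} (hh : Integrable h) (hg : Integrable g) :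
    ∫ x, 𝓕⁻ h x * g x = ∫ η, h η * 𝓕⁻ g η := by
  have hflip : (-innerₗ ℝ : ℝ →ₗ[ℝ] ℝ →ₗ[ℝ] ℝ).flip = -innerₗ ℝ := by
    ext; simp
  have h := VectorFourier.integral_fourierIntegral_smul_eq_flip (e := Real.fourierChar)
    (L := -innerₗ ℝ) Real.continuous_fourierChar (by fun_prop) hh hg
  rwa [hflip] at h

lemma integrable_fourierInv_mul {h g : ℝ → ℂ} (hh : Integrable h) (hg : Integrable g) :
    Integrable (fun x => 𝓕⁻ h x * g x) :=
  hg.bdd_mul (c := ∫ η, ‖h η‖)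
    (VectorFourier.fourierIntegral_continuous (L := -innerₗ ℝ) Real.continuous_fourierChar
      (by fun_prop) hh).aestronglyMeasurable
    (ae_of_all _ fun _ => VectorFourier.norm_fourierIntegral_le_integral_norm _ _ _ _ _)

lemma lam_add {f g : ℝ → ℂ} {x : ℝ} (hf : DifferentiableAt ℝ f x) (hg : DifferentiableAt ℝ g x) :
    lam (fun y => f y + g y) x = lam f x + lam g x := by
  simp only [lam, deriv_fun_add hf hg]; ring

lemma lam_sub {f g : ℝ → ℂ} {x : ℝ} (hf : DifferentiableAt ℝ f x) (hg : DifferentiableAt ℝ g x) :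
    lam (fun y => f y - g y) x = lam f x - lam g x := by
  simp only [lam, deriv_fun_sub hf hg]; ring

lemma lam_sq_mul {q s : ℝ → ℂ} {x : ℝ} (hq : DifferentiableAt ℝ q x)
    (hs : DifferentiableAt ℝ s x) :
    lam (fun y => q y ^ 2 * s y) x = q x ^ 2 * lam s x + x * (2 * q x * deriv q x) * s x := by
  simp only [lam, deriv_fun_mul (hq.fun_pow 2) hs, deriv_fun_pow hq]; push_cast; ring

namespace SchwartzMap

lemma integrable_mul (f g : 𝓢(ℝ, ℂ)) : Integrable (fun x => f x * g x) :=
  (pairing (ContinuousLinearMap.mul ℂ ℂ) f g).integrable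

lemma integrable_abs_smul_fourier (f : 𝓢(ℝ, ℂ)) :
    Integrable (fun η : ℝ => ((2 * π * |η| : ℝ) : ℂ) • 𝓕 (⇑f) η) := by
  rw [← fourier_coe]
  refine (((𝓕 f).integrable_pow_mul volume 1).const_mul (2 * π)).mono'
    (by fun_prop) (ae_of_all _ fun η => le_of_eq ?_)
  rw [norm_smul, Complex.norm_real, Real.norm_eq_abs, abs_mul, abs_abs, abs_of_pos (by positivity),
    pow_one, Real.norm_eq_abs, mul_assoc]

lemma integrable_Dop_mul (f g : 𝓢(ℝ, ℂ)) : Integrable (fun x => Dop f x * g x) := by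
  rw [Dop_eq_fourierInv]
  exact integrable_fourierInv_mul (integrable_abs_smul_fourier f) g.integrable

lemma integrable_mul_Dop (f g : 𝓢(ℝ, ℂ)) : Integrable (fun x => f x * Dop g x) := by
  simpa only [mul_comm] using integrable_Dop_mul g f

lemma integral_Dop_mul_comm (f g : 𝓢(ℝ, ℂ)) :
    ∫ x, Dop f x * g x = ∫ x, f x * Dop g x := by
  have hsymbol (u v : 𝓢(ℝ, ℂ)) : ∫ x, Dop u x * v x
      = ∫ η, ((2 * π * |η| : ℝ) : ℂ) * (𝓕 (⇑u) η * 𝓕 (⇑v) (-η)) := by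
    rw [Dop_eq_fourierInv,
      integral_fourierInv_mul_comm (integrable_abs_smul_fourier u) v.integrable]
    simp only [fourierInv_eq_fourier_neg, smul_eq_mul, mul_assoc]
  simp_rw [mul_comm (f _) (Dop g _)]
  rw [hsymbol, hsymbol, ← integral_neg_eq_self]
  simp only [abs_neg, neg_neg, mul_comm (𝓕 (⇑f) _)]

lemma integral_Dop_mul_sub_mul_Dop (f g : 𝓢(ℝ, ℂ)) :
    ∫ x, (Dop f x * g x - f x * Dop g x) = 0 := by
  rw [integral_sub (integrable_Dop_mul f g) (integrable_mul_Dop f g), integral_Dop_mul_comm,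
    sub_self]

noncomputable def lamS (f : 𝓢(ℝ, ℂ)) : 𝓢(ℝ, ℂ) :=
  (1 / 2 : ℂ) • f + smulLeftCLM ℂ Complex.ofReal (derivCLM ℂ ℂ f)

@[simp]
lemma coe_lamS (f : 𝓢(ℝ, ℂ)) : ⇑(lamS f) = lam f := by
  ext x
  simp [lamS, lam, smulLeftCLM_apply_apply Function.Complex.hasTemperateGrowth_ofReal]

lemma differentiable_lam (f : 𝓢(ℝ, ℂ)) : Differentiable ℝ (lam f) :=
  coe_lamS f ▸ (lamS f).differentiable

lemma integral_lamS_mul_add_mul_lamS (f g : 𝓢(ℝ, ℂ)) :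
    ∫ x, (lamS f x * g x + f x * lamS g x) = 0 := by
  let H := smulLeftCLM ℂ Complex.ofReal (pairing (ContinuousLinearMap.mul ℂ ℂ) f g)
  have hH : ⇑H = fun x : ℝ => (x : ℂ) * (f x * g x) := by
    ext x
    simp [H, smulLeftCLM_apply_apply Function.Complex.hasTemperateGrowth_ofReal]
  refine integral_eq_zero_of_hasDerivAt_of_integrable (f := H) (fun x => ?_)
    ((integrable_mul (lamS f) g).fun_add (integrable_mul f (lamS g))) H.integrable
  rw [hH]
  refine (((hasDerivAt_id x).ofReal_comp).fun_mul
    ((f.hasDerivAt x).fun_mul (g.hasDerivAt x))).congr_deriv ?_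
  simp only [coe_lamS, lam, id]
  push_cast
  ring

end SchwartzMap

theorem key_mass_relation_general (Q S₁ T₂ : SchwartzMap ℝ ℂ)
    (hS₁ : ∀ x : ℝ, Dop (⇑S₁) x + S₁ x - (Q x)^2 * S₁ x = lam (⇑Q) x)
    (hT₂ : ∀ x : ℝ, Dop (⇑T₂) x + T₂ x - 3 * (Q x)^2 * T₂ x
      = (1/2 : ℂ) * S₁ x - lam (⇑S₁) x + (S₁ x)^2 * Q x)
    (hLQ : ∀ x : ℝ, Dop (lam (⇑Q)) x + lam (⇑Q) x - 3 * (Q x)^2 * lam (⇑Q) x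
      = -Q x)
    (hcomm : ∀ (f : SchwartzMap ℝ ℂ) (x : ℝ),
      Dop (lam (⇑f)) x - lam (Dop (⇑f)) x = Dop (⇑f) x) :
    (∫ x : ℝ, S₁ x * S₁ x) + 2 * ∫ x : ℝ, Q x * T₂ x = 0 := by
  have hDS : Dop S₁ = fun y => lam Q y - S₁ y + Q y ^ 2 * S₁ y :=
    funext fun y => by linear_combination hS₁ y
  have hlamDS (x : ℝ) : lam (Dop S₁) x
      = lam (lam Q) x - lam S₁ x + (Q x ^ 2 * lam S₁ x + x * (2 * Q x * deriv Q x) * S₁ x) := by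
    rw [hDS, lam_add ((differentiable_lam Q x).fun_sub S₁.differentiableAt)
        ((Q.differentiableAt.fun_pow 2).fun_mul S₁.differentiableAt),
      lam_sub (differentiable_lam Q x) S₁.differentiableAt,
      lam_sq_mul Q.differentiableAt S₁.differentiableAt]
  have hintegrand (x : ℝ) : S₁ x * S₁ x + 2 * (Q x * T₂ x)
      = -2 * (Dop (lam Q) x * T₂ x - lam Q x * Dop T₂ x)
        - (Dop (lam S₁) x * S₁ x - lam S₁ x * Dop S₁ x)
        + (lam (lam Q) x * S₁ x + lam Q x * lam S₁ x) := by
    have hlamQ : lam Q x = 1 / 2 * Q x + x * deriv Q x := rfl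
    linear_combination 2 * T₂ x * hLQ x - 2 * lam Q x * hT₂ x + S₁ x * hcomm S₁ x
      + S₁ x * hlamDS x + (S₁ x - lam S₁ x) * hS₁ x - 2 * Q x * S₁ x ^ 2 * hlamQ
  simp only [← coe_lamS] at hintegrand
  have hD₁ := (integrable_Dop_mul (lamS Q) T₂).sub' (integrable_mul_Dop (lamS Q) T₂)
  have hD₂ := (integrable_Dop_mul (lamS S₁) S₁).sub' (integrable_mul_Dop (lamS S₁) S₁)
  have hΛ := (integrable_mul (lamS (lamS Q)) S₁).fun_add (integrable_mul (lamS Q) (lamS S₁))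
  rw [← integral_const_mul,
    ← integral_add (integrable_mul S₁ S₁) ((integrable_mul Q T₂).const_mul 2)]
  simp_rw [hintegrand]
  rw [integral_add ((hD₁.const_mul _).sub' hD₂) hΛ, integral_sub (hD₁.const_mul _) hD₂,
    integral_const_mul, integral_Dop_mul_sub_mul_Dop, integral_Dop_mul_sub_mul_Dop,
    integral_lamS_mul_add_mul_lamS]
  ring

/-- Key algebraic relation `(S₁, S₁) + 2(Q, T₂) = 0` for the blowup profile:
`Q` the ground state of `DQ + Q = Q³`, `L₋S₁ = ΛQ`,
`L₊T₂ = (1/2)S₁ - ΛS₁ + S₁²Q`, assuming `L₊(ΛQ) = -Q`, `[D,Λ] = D`,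
`[Q²,Λ]f = -2xQ'Q f`, and `-(xQ')Q + QΛQ = (1/2)Q²`. -/
theorem key_mass_relation (Q S₁ T₂ : SchwartzMap ℝ ℂ)
    (hQreal : ∀ x, (Q x).im = 0) (hS₁real : ∀ x, (S₁ x).im = 0)
    (hT₂real : ∀ x, (T₂ x).im = 0)
    (hQ : ∀ x : ℝ, Dop (⇑Q) x + Q x = (Q x)^3)
    (hS₁ : ∀ x : ℝ, Dop (⇑S₁) x + S₁ x - (Q x)^2 * S₁ x = lam (⇑Q) x)
    (hT₂ : ∀ x : ℝ, Dop (⇑T₂) x + T₂ x - 3 * (Q x)^2 * T₂ x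
      = (1/2 : ℂ) * S₁ x - lam (⇑S₁) x + (S₁ x)^2 * Q x)
    (hLQ : ∀ x : ℝ, Dop (lam (⇑Q)) x + lam (⇑Q) x - 3 * (Q x)^2 * lam (⇑Q) x
      = -Q x)
    (hcomm : ∀ (f : SchwartzMap ℝ ℂ) (x : ℝ),
      Dop (lam (⇑f)) x - lam (Dop (⇑f)) x = Dop (⇑f) x)
    (hQcomm : ∀ (f : SchwartzMap ℝ ℂ) (x : ℝ),
      (Q x)^2 * lam (⇑f) x - lam (fun y => (Q y)^2 * f y) x
        = -(2 * (x : ℂ) * deriv (⇑Q) x * Q x) * f x)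
    (hpoint : ∀ x : ℝ, -((x : ℂ) * deriv (⇑Q) x) * Q x + Q x * lam (⇑Q) x
      = (1/2 : ℂ) * (Q x)^2) :
    (∫ x : ℝ, S₁ x * S₁ x) + 2 * ∫ x : ℝ, Q x * T₂ x = 0 :=
  key_mass_relation_general Q S₁ T₂ hS₁ hT₂ hLQ hcomm
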